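/- Let F(t₁,t₂,t₃) = (1/12)t₃t₁³ + (1/2)t₁t₂t₃ + t₂³/12 + (1/4)t₃²·log t₃ on the domain U = {(t₁,t₂,t₃) ∈ ℝ³ : t₃ > 0}. Let c_{ijk}(t) = ∂³F/∂t_i∂t_j∂t_k and define η_{ij} = c_{2ij}. Then: (a) η is the constant matrix with η₁₃ = η₃₁ = 1/2, η₂₂ = 1/2 and all other entries 0 (in particular η is invertible); (b) (WDVV equations) for all t ∈ U and all indices i, j, q, n ∈ {1,2,3}: Σ_{k,p=1}^{3} c_{ijk}(t)·η^{kp}·c_{pqn}(t) = Σ_{k,p=1}^{3} c_{njk}(t)·η^{kp}·c_{pqi}(t), where (η^{kp}) is the inverse matrix of (η_{ij}); (c) (quasihomogeneity) for all t ∈ U: (1/2)t₁·∂₁F + t₂·∂₂F + (3/2)t₃·∂₃F = 3F + (3/8)t₃². (Thus F is the potential of the logarithmic Dubrovin–Frobenius manifold constructed from the unconstrained Adler–Gelfand–Dickey bracket for gl₃, with unit field ∂_{t₂} and Euler field E = (1/2)t₁∂₁ + t₂∂₂ + (3/2)t₃∂₃.) -/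

import Mathlib

/-!
The third derivatives of `F` are computed explicitly on `t₃ ≠ 0`: they are affine in `t₁, t₃`
except for `c₃₃₃ = 1/(2t₃)`, and `c₂ⱼₖ = ηⱼₖ`. Writing `Cⱼ = (cᵢⱼₖ)ᵢₖ`, total symmetry of `c`
turns WDVV into `Cⱼ η⁻¹ C_q = C_q η⁻¹ Cⱼ`; this is trivial when `j = q` or when one index is the
unit direction (`C₂ = η`), so only the pair `(1, 3)` is a genuine check. Quasihomogeneity holds
because every term of `F` has Euler degree `3`, except that `E (t₃² log t₃)` picks up an extra
`(3/2) t₃²` from differentiating the logarithm.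
-/

open Matrix

/-- Partial derivative of `f : (Fin 3 → ℝ) → ℝ` in the `i`-th coordinate direction. -/
noncomputable def pd3 (i : Fin 3) (f : (Fin 3 → ℝ) → ℝ) : (Fin 3 → ℝ) → ℝ :=
  fun x => fderiv ℝ f x (Pi.single i 1)

/-- The potential `F = (1/12)t₃t₁³ + (1/2)t₁t₂t₃ + t₂³/12 + (1/4)t₃²·log t₃`
(coordinates `t₁,t₂,t₃` are `t 0, t 1, t 2`). -/
noncomputable def F3 : (Fin 3 → ℝ) → ℝ := fun t =>
  (1 / 12) * t 2 * (t 0) ^ 3 + (1 / 2) * t 0 * t 1 * t 2 + (t 1) ^ 3 / 12 +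
    (1 / 4) * (t 2) ^ 2 * Real.log (t 2)

/-- `c_{ijk}(t) = ∂³F/∂t_i∂t_j∂t_k`. -/
noncomputable def c3 (i j k : Fin 3) : (Fin 3 → ℝ) → ℝ := pd3 i (pd3 j (pd3 k F3))

/-- The flat metric `η` with `η₁₃ = η₃₁ = η₂₂ = 1/2` and all other entries `0`. -/
noncomputable def eta3 : Matrix (Fin 3) (Fin 3) ℝ :=
  !![0, 0, 1/2; 0, 1/2, 0; 1/2, 0, 0]

theorem wdvv_of_mul_mul_comm {ι R : Type*} [Fintype ι] [CommRing R] (c : ι → Matrix ι ι R)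
    (G : Matrix ι ι R) (hG : G.IsSymm) (hc : ∀ i j, c i j = c j i) (hc' : ∀ i, (c i).IsSymm)
    (hcomm : ∀ j q, c j * G * c q = c q * G * c j) (i j q n : ι) :
    ∑ k, ∑ p, c i j k * G k p * c p q n = ∑ k, ∑ p, c n j k * G k p * c p q i := by
  have hmul : ∀ a b, ∑ k, ∑ p, c a j k * G k p * c p q b = (c j * G * c q) a b := by
    intro a b
    simp only [Matrix.mul_apply, Finset.sum_mul]
    rw [Finset.sum_comm]
    simp only [hc a j, hc _ q]
  have hsymm : (c j * G * c q)ᵀ = c j * G * c q := by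
    rw [Matrix.transpose_mul, Matrix.transpose_mul, hc' j, hG, hc' q, ← Matrix.mul_assoc, hcomm]
  rw [hmul, hmul, ← Matrix.transpose_apply (c j * G * c q) i n, hsymm]

section PartialDerivatives

variable {f g : (Fin 3 → ℝ) → ℝ} {x : Fin 3 → ℝ} (i : Fin 3)

lemma pd3_add (hf : DifferentiableAt ℝ f x) (hg : DifferentiableAt ℝ g x) :
    pd3 i (fun t => f t + g t) x = pd3 i f x + pd3 i g x := by
  simp [pd3, fderiv_fun_add hf hg]

lemma pd3_mul (hf : DifferentiableAt ℝ f x) (hg : DifferentiableAt ℝ g x) :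
    pd3 i (fun t => f t * g t) x = pd3 i f x * g x + f x * pd3 i g x := by
  simp [pd3, fderiv_fun_mul hf hg]
  ring

lemma pd3_pow (n : ℕ) (hf : DifferentiableAt ℝ f x) :
    pd3 i (fun t => f t ^ n) x = n * f x ^ (n - 1) * pd3 i f x := by
  simp [pd3, fderiv_fun_pow n hf]

lemma pd3_log (hf : DifferentiableAt ℝ f x) (hx : f x ≠ 0) :
    pd3 i (fun t => Real.log (f t)) x = pd3 i f x / f x := by
  simp [pd3, fderiv.log hf hx]
  ring

lemma pd3_const (c : ℝ) : pd3 i (fun _ => c) x = 0 := by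
  simp [pd3]

lemma pd3_apply (j : Fin 3) : pd3 i (fun t => t j) x = (Pi.single i 1 : Fin 3 → ℝ) j := by
  simp [pd3, fderiv_apply]

lemma pd3_congr_of_eqOn {U : Set (Fin 3 → ℝ)} (hU : IsOpen U) (h : Set.EqOn f g U) (hx : x ∈ U) :
    pd3 i f x = pd3 i g x := by
  simp only [pd3, (h.eventuallyEq_of_mem (hU.mem_nhds hx)).fderiv_eq]

end PartialDerivatives

noncomputable def gradF3 : Fin 3 → (Fin 3 → ℝ) → ℝ
  | 0 => fun t => (1 / 4) * t 2 * t 0 ^ 2 + (1 / 2) * t 1 * t 2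
  | 1 => fun t => (1 / 2) * t 0 * t 2 + t 1 ^ 2 / 4
  | 2 => fun t => (1 / 12) * t 0 ^ 3 + (1 / 2) * t 0 * t 1 + (1 / 2) * t 2 * Real.log (t 2) +
      (1 / 4) * t 2

noncomputable def hessF3 : Fin 3 → Fin 3 → (Fin 3 → ℝ) → ℝ
  | 0, 0 => fun t => (1 / 2) * t 2 * t 0
  | 0, 1 | 1, 0 => fun t => (1 / 2) * t 2
  | 0, 2 | 2, 0 => fun t => (1 / 4) * t 0 ^ 2 + (1 / 2) * t 1
  | 1, 1 => fun t => t 1 / 2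
  | 1, 2 | 2, 1 => fun t => (1 / 2) * t 0
  | 2, 2 => fun t => (1 / 2) * Real.log (t 2) + 3 / 4

noncomputable def d3F3 (t : Fin 3 → ℝ) : Fin 3 → Matrix (Fin 3) (Fin 3) ℝ :=
  ![!![t 2 / 2, 0, t 0 / 2; 0, 0, 1 / 2; t 0 / 2, 1 / 2, 0],
    eta3,
    !![t 0 / 2, 1 / 2, 0; 1 / 2, 0, 0; 0, 0, 1 / (2 * t 2)]]

lemma pd3_F3 {x : Fin 3 → ℝ} (hx : x 2 ≠ 0) (k : Fin 3) : pd3 k F3 x = gradF3 k x := by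
  unfold F3
  simp (disch := first | assumption | fun_prop (disch := assumption)) only [div_eq_mul_inv,
    pd3_add, pd3_mul, pd3_pow, pd3_log, pd3_const, pd3_apply]
  fin_cases k <;> simp [gradF3] <;> field_simp <;> ring

lemma pd3_gradF3 {x : Fin 3 → ℝ} (hx : x 2 ≠ 0) (j k : Fin 3) :
    pd3 j (gradF3 k) x = hessF3 j k x := by
  fin_cases k <;> simp only [gradF3] <;>
  simp (disch := first | assumption | fun_prop (disch := assumption)) only [div_eq_mul_inv,
    pd3_add, pd3_mul, pd3_pow, pd3_log, pd3_const, pd3_apply] <;>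
  fin_cases j <;> simp [hessF3] <;> field_simp <;> ring

lemma pd3_hessF3 {x : Fin 3 → ℝ} (hx : x 2 ≠ 0) (i j k : Fin 3) :
    pd3 i (hessF3 j k) x = d3F3 x i j k := by
  fin_cases j <;> fin_cases k <;> simp only [hessF3] <;>
  simp (disch := first | assumption | fun_prop (disch := assumption)) only [div_eq_mul_inv,
    pd3_add, pd3_mul, pd3_pow, pd3_log, pd3_const, pd3_apply] <;>
  fin_cases i <;> simp [d3F3, eta3] <;> field_simp <;> ring

lemma c3_eq_d3F3 {t : Fin 3 → ℝ} (ht : t 2 ≠ 0) (i j k : Fin 3) : c3 i j k t = d3F3 t i j k := by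
  have hU : IsOpen {s : Fin 3 → ℝ | s 2 ≠ 0} := isOpen_ne_fun (continuous_apply 2) continuous_const
  have hess : Set.EqOn (pd3 j (pd3 k F3)) (hessF3 j k) {s | s 2 ≠ 0} := fun s hs =>
    (pd3_congr_of_eqOn j hU (fun u hu => pd3_F3 hu k) hs).trans (pd3_gradF3 hs j k)
  rw [c3, pd3_congr_of_eqOn i hU hess ht, pd3_hessF3 ht]

lemma F3_quasihomogeneous {t : Fin 3 → ℝ} (ht : t 2 ≠ 0) :
    (1 / 2) * t 0 * pd3 0 F3 t + t 1 * pd3 1 F3 t + (3 / 2) * t 2 * pd3 2 F3 t =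
      3 * F3 t + (3 / 8) * (t 2) ^ 2 := by
  simp only [pd3_F3 ht, gradF3, F3]
  ring

lemma isUnit_eta3 : IsUnit eta3 := by
  simp [Matrix.isUnit_iff_isUnit_det, eta3, Matrix.det_fin_three]

lemma eta3_inv : eta3⁻¹ = !![0, 0, 2; 0, 2, 0; 2, 0, 0] := by
  refine Matrix.inv_eq_right_inv ?_
  rw [Matrix.one_fin_three]
  norm_num [eta3]

lemma eta3_isSymm : eta3.IsSymm :=
  Matrix.IsSymm.ext fun a b => by fin_cases a <;> fin_cases b <;> rfl

lemma d3F3_symm (t : Fin 3 → ℝ) (i j : Fin 3) : d3F3 t i j = d3F3 t j i := by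
  fin_cases i <;> fin_cases j <;> rfl

lemma d3F3_isSymm (t : Fin 3 → ℝ) (i : Fin 3) : (d3F3 t i).IsSymm := by
  refine Matrix.IsSymm.ext fun a b => ?_
  fin_cases i <;> fin_cases a <;> fin_cases b <;> rfl

lemma d3F3_mul_inv_mul_comm {t : Fin 3 → ℝ} (ht : t 2 ≠ 0) (j q : Fin 3) :
    d3F3 t j * eta3⁻¹ * d3F3 t q = d3F3 t q * eta3⁻¹ * d3F3 t j := by
  have hunit : ∀ a, d3F3 t 1 * eta3⁻¹ * d3F3 t a = d3F3 t a * eta3⁻¹ * d3F3 t 1 := by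
    intro a
    have hdet := (Matrix.isUnit_iff_isUnit_det eta3).mp isUnit_eta3
    rw [show d3F3 t 1 = eta3 from rfl, Matrix.mul_nonsing_inv eta3 hdet, Matrix.one_mul,
      Matrix.mul_assoc, Matrix.nonsing_inv_mul eta3 hdet, Matrix.mul_one]
  have h02 : d3F3 t 0 * eta3⁻¹ * d3F3 t 2 = d3F3 t 2 * eta3⁻¹ * d3F3 t 0 := by
    simp [d3F3, eta3_inv]
    refine ⟨?_, ?_, ?_⟩ <;> field_simp
  fin_cases j <;> fin_cases q
  all_goals first | rfl | exact h02 | exact h02.symm | exact hunit _ | exact (hunit _).symm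

/-- on `U = {t₃ > 0}`: (a) `c_{2ij} = η_{ij}` is the stated constant
invertible matrix; (b) the WDVV equations hold; (c) quasihomogeneity:
`(1/2)t₁∂₁F + t₂∂₂F + (3/2)t₃∂₃F = 3F + (3/8)t₃²`. -/
theorem gl3_frobenius_potential :
    ((∀ t : Fin 3 → ℝ, 0 < t 2 → ∀ i j : Fin 3, c3 1 i j t = eta3 i j) ∧
      IsUnit eta3) ∧
    (∀ t : Fin 3 → ℝ, 0 < t 2 → ∀ i j q n : Fin 3,
      ∑ k : Fin 3, ∑ p : Fin 3, c3 i j k t * eta3⁻¹ k p * c3 p q n t =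
        ∑ k : Fin 3, ∑ p : Fin 3, c3 n j k t * eta3⁻¹ k p * c3 p q i t) ∧
    (∀ t : Fin 3 → ℝ, 0 < t 2 →
      (1 / 2) * t 0 * pd3 0 F3 t + t 1 * pd3 1 F3 t + (3 / 2) * t 2 * pd3 2 F3 t =
        3 * F3 t + (3 / 8) * (t 2) ^ 2) := by
  refine ⟨⟨fun t ht i j => c3_eq_d3F3 ht.ne' 1 i j, isUnit_eta3⟩, fun t ht i j q n => ?_,
    fun t ht => F3_quasihomogeneous ht.ne'⟩
  simp only [c3_eq_d3F3 ht.ne']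
  exact wdvv_of_mul_mul_comm (d3F3 t) eta3⁻¹ eta3_isSymm.inv (d3F3_symm t) (d3F3_isSymm t)
    (d3F3_mul_inv_mul_comm ht.ne') i j q n
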